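/- arXiv:1108.0597 — 3 statements merged into one kernel-verified Lean document; each statement's English description precedes it below -/
import Mathlib

section
/- Let α, σ, L > 0, set R = L/(2π), β = (α − σR³)/R², and for an integer k ≥ 2 define the second-order energy coefficient c_k = σ + k²β/R + α(2k⁴ − 5k² + 2)/R³. Then c_k < 0 if and only if γ := σL³/α > 16π³(k² − 1). -/
/-! Substituting `β` and using `2k⁴ − 5k² + 2 = (2k² − 1)(k² − 2)`, the coefficient factors as
`c_k = (k² − 1)(2α(k² − 1) − σR³)/R³`. For `k ≥ 2` the first factor is positive, so `c_k < 0`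
exactly when `σR³ > 2α(k² − 1)`; since `L³ = 8π³R³` this is `γ > 16π³(k² − 1)`. -/

open Real

lemma mode_coeff_eq_factor {α σ R : ℝ} (hR : R ≠ 0) (k : ℝ) :
    σ + k ^ 2 * ((α - σ * R ^ 3) / R ^ 2) / R + α * (2 * k ^ 4 - 5 * k ^ 2 + 2) / R ^ 3
      = (k ^ 2 - 1) * (2 * α * (k ^ 2 - 1) - σ * R ^ 3) / R ^ 3 := by
  field_simp
  ring

lemma factored_mode_coeff_neg_iff {α σ R x : ℝ} (hR : 0 < R) (hx : 1 < x) :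
    (x - 1) * (2 * α * (x - 1) - σ * R ^ 3) / R ^ 3 < 0 ↔ 2 * α * (x - 1) < σ * R ^ 3 := by
  rw [div_lt_iff₀ (by positivity), zero_mul, ← mul_zero (x - 1),
    mul_lt_mul_iff_right₀ (sub_pos.mpr hx), sub_neg]

lemma lt_gamma_iff {α σ L R y : ℝ} (hα : 0 < α) (hL : L = 2 * π * R) :
    16 * π ^ 3 * y < σ * L ^ 3 / α ↔ 2 * α * y < σ * R ^ 3 := by
  have hlhs : 16 * π ^ 3 * y * α = 8 * π ^ 3 * (2 * α * y) := by ring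
  have hrhs : σ * (2 * π * R) ^ 3 = 8 * π ^ 3 * (σ * R ^ 3) := by ring
  rw [lt_div_iff₀ hα, hL, hlhs, hrhs, mul_lt_mul_iff_right₀ (by positivity)]

theorem euler_plateau_mode_instability_general
    (α σ L : ℝ) (hα : 0 < α) (hL : 0 < L)
    (R β : ℝ) (hR : R = L / (2 * π)) (hβ : β = (α - σ * R ^ 3) / R ^ 2)
    (k : ℕ) (hk : 2 ≤ k)
    (c : ℝ)
    (hc : c = σ + (k : ℝ) ^ 2 * β / R + α * (2 * (k : ℝ) ^ 4 - 5 * (k : ℝ) ^ 2 + 2) / R ^ 3) :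
    c < 0 ↔ σ * L ^ 3 / α > 16 * π ^ 3 * ((k : ℝ) ^ 2 - 1) := by
  have hR0 : 0 < R := by rw [hR]; positivity
  have hk1 : 1 < (k : ℝ) ^ 2 := by
    have : (2 : ℝ) ≤ k := by exact_mod_cast hk
    nlinarith
  have hLR : L = 2 * π * R := by rw [hR]; field_simp
  rw [hc, hβ, mode_coeff_eq_factor hR0.ne', factored_mode_coeff_neg_iff hR0 hk1, gt_iff_lt,
    lt_gamma_iff hα hLR]

/-- The coefficient `c_k = σ + k²β/R + α(2k⁴ − 5k² + 2)/R³` of the second-order term in the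
energy of a radially perturbed circular disk (mode `k ≥ 2`) is negative if and only if
`γ = σL³/α > 16π³(k² − 1)`. Here `R = L/(2π)` and `β = (α − σR³)/R²`. -/
theorem euler_plateau_mode_instability
    (α σ L : ℝ) (hα : 0 < α) (hσ : 0 < σ) (hL : 0 < L)
    (R β : ℝ) (hR : R = L / (2 * π)) (hβ : β = (α - σ * R ^ 3) / R ^ 2)
    (k : ℕ) (hk : 2 ≤ k)
    (c : ℝ)
    (hc : c = σ + (k : ℝ) ^ 2 * β / R + α * (2 * (k : ℝ) ^ 4 - 5 * (k : ℝ) ^ 2 + 2) / R ^ 3) :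
    c < 0 ↔ σ * L ^ 3 / α > 16 * π ^ 3 * ((k : ℝ) ^ 2 - 1) :=
  euler_plateau_mode_instability_general α σ L hα hL R β hR hβ k hk c hc
end

section
/- For the closed curve c(φ) = (R(1+t²)cos φ, R(1−t²)sin φ, tR sin 2φ), φ ∈ [0,2π], the total length satisfies L(t) = ∮ |c'(φ)| dφ = πR(2 + 2t² − t⁴) + O(t⁶) as t → 0. -/
open Real Asymptotics Filter

/-- Boundary curve `c(φ) = (R(1+t²)cos φ, R(1−t²)sin φ, tR sin 2φ)` of the trial surface. -/
noncomputable def bcurve (R t φ : ℝ) : ℝ × ℝ × ℝ :=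
  (R * (1 + t ^ 2) * cos φ, R * (1 - t ^ 2) * sin φ, t * R * sin (2 * φ))

/-- Euclidean dot product on `ℝ³ = ℝ × ℝ × ℝ`. -/
noncomputable def dot (a b : ℝ × ℝ × ℝ) : ℝ :=
  a.1 * b.1 + a.2.1 * b.2.1 + a.2.2 * b.2.2

/-- Length of the boundary curve as a function of the shape parameter `t`. -/
noncomputable def blength (R t : ℝ) : ℝ :=
  ∫ φ in (0 : ℝ)..(2 * π), Real.sqrt (dot (deriv (bcurve R t) φ) (deriv (bcurve R t) φ))

/-!
The speed of the curve is `|c'(φ)| = R √(s² + w(φ))` with `s = 1 + t²` and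
`w(φ) = 2t² (cos 4φ - cos 2φ)`, so `w = O(t²)` uniformly in `φ`. Replacing the square root by its
second-order Taylor polynomial `s + w/(2s) - w²/(8s³)` costs `O(|w|³) = O(t⁶)` pointwise. The
polynomial integrates in closed form because `cos 4φ - cos 2φ` has mean `0` and mean square `1`
over a period, giving `2π s - π t⁴ / s³ = π (2 + 2t² - t⁴) + O(t⁶)`.
-/

open Topology

lemma abs_sqrt_one_add_sub_le {z : ℝ} (hz : |z| ≤ 1 / 2) :
    |√(1 + z) - (1 + z / 2 - z ^ 2 / 8)| ≤ |z| ^ 3 := by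
  obtain ⟨hz₁, hz₂⟩ := abs_le.mp hz
  set q := 1 + z / 2 - z ^ 2 / 8 with hq
  have hsum : 1 / 2 ≤ √(1 + z) + q := by nlinarith [sqrt_nonneg (1 + z)]
  have hdiff : (√(1 + z) - q) * (√(1 + z) + q) = z ^ 3 * (1 / 8 - z / 64) := by
    rw [hq]; linear_combination sq_sqrt (show 0 ≤ 1 + z by linarith)
  have hcubic : |z ^ 3 * (1 / 8 - z / 64)| ≤ |z| ^ 3 / 2 := by
    rw [abs_mul, abs_pow, abs_of_pos (by linarith : 0 < 1 / 8 - z / 64)]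
    nlinarith [pow_nonneg (abs_nonneg z) 3]
  refine le_of_mul_le_mul_right ?_ (by linarith : 0 < √(1 + z) + q)
  calc |√(1 + z) - q| * (√(1 + z) + q) = |z ^ 3 * (1 / 8 - z / 64)| := by
        rw [← hdiff, abs_mul, abs_of_pos (by linarith : 0 < √(1 + z) + q)]
    _ ≤ |z| ^ 3 / 2 := hcubic
    _ ≤ |z| ^ 3 * (√(1 + z) + q) := by nlinarith [pow_nonneg (abs_nonneg z) 3]

noncomputable def sqrtApprox (s w : ℝ) : ℝ := s + w / (2 * s) - w ^ 2 / (8 * s ^ 3)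

lemma abs_sqrt_sq_add_sub_sqrtApprox_le {s w : ℝ} (hs : 0 < s) (hw : |w| ≤ s ^ 2 / 2) :
    |√(s ^ 2 + w) - sqrtApprox s w| ≤ |w| ^ 3 / s ^ 5 := by
  have hz : |w / s ^ 2| ≤ 1 / 2 := by
    rw [abs_div, abs_of_pos (pow_pos hs 2), div_le_iff₀ (pow_pos hs 2)]; linarith
  have hscale : √(s ^ 2 + w) - sqrtApprox s w
      = s * (√(1 + w / s ^ 2) - (1 + w / s ^ 2 / 2 - (w / s ^ 2) ^ 2 / 8)) := by
    rw [show s ^ 2 + w = s ^ 2 * (1 + w / s ^ 2) by field_simp, sqrt_mul (sq_nonneg s),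
      sqrt_sq hs.le, sqrtApprox]
    field_simp
  calc |√(s ^ 2 + w) - sqrtApprox s w| ≤ s * |w / s ^ 2| ^ 3 := by
        rw [hscale, abs_mul, abs_of_pos hs]
        exact mul_le_mul_of_nonneg_left (abs_sqrt_one_add_sub_le hz) hs.le
    _ = |w| ^ 3 / s ^ 5 := by
        rw [abs_div, abs_of_pos (by positivity : 0 < s ^ 2)]
        field_simp

lemma hasDerivAt_sin_const_mul (k φ : ℝ) :
    HasDerivAt (fun φ => sin (k * φ)) (k * cos (k * φ)) φ := by
  simpa [mul_comm] using ((hasDerivAt_id φ).const_mul k).sin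

lemma sin_ofNat_mul_two_pi (n : ℕ) [n.AtLeastTwo] : sin ((ofNat(n) : ℝ) * (2 * π)) = 0 := by
  rw [← mul_assoc, ← Nat.cast_ofNat, ← Nat.cast_two, ← Nat.cast_mul]
  exact sin_nat_mul_pi _

lemma cos_four_mul_eq (φ : ℝ) : cos (4 * φ) = 2 * cos (2 * φ) ^ 2 - 1 := by
  rw [← cos_two_mul]; ring_nf

lemma hasDerivAt_bcurve (R t φ : ℝ) :
    HasDerivAt (bcurve R t)
      (-(R * (1 + t ^ 2) * sin φ), R * (1 - t ^ 2) * cos φ, t * R * (2 * cos (2 * φ))) φ :=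
  ((hasDerivAt_cos φ).const_mul _ |>.congr_deriv (by ring)).prodMk
    (((hasDerivAt_sin φ).const_mul _).prodMk ((hasDerivAt_sin_const_mul 2 φ).const_mul _))

noncomputable def osc (φ : ℝ) : ℝ := cos (4 * φ) - cos (2 * φ)

@[fun_prop]
lemma continuous_osc : Continuous osc := by unfold osc; fun_prop

lemma abs_osc_le (φ : ℝ) : |osc φ| ≤ 2 :=
  (abs_sub _ _).trans (by linarith [abs_cos_le_one (4 * φ), abs_cos_le_one (2 * φ)])

lemma osc_sq (φ : ℝ) :
    osc φ ^ 2 = 1 + cos (8 * φ) / 2 + cos (4 * φ) / 2 - cos (6 * φ) - cos (2 * φ) := by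
  have h8 : cos (8 * φ) = 2 * cos (4 * φ) ^ 2 - 1 := by rw [← cos_two_mul]; ring_nf
  have h6 : cos (6 * φ) = cos (4 * φ) * cos (2 * φ) - sin (4 * φ) * sin (2 * φ) := by
    rw [← cos_add]; ring_nf
  have h2 : cos (2 * φ) = cos (4 * φ) * cos (2 * φ) + sin (4 * φ) * sin (2 * φ) := by
    rw [← cos_sub]; ring_nf
  rw [osc]
  linear_combination -h8 / 2 - cos_four_mul_eq φ / 2 + h6 + h2

lemma integral_osc : ∫ φ in (0 : ℝ)..(2 * π), osc φ = 0 := by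
  simp (disch := apply Continuous.intervalIntegrable; fun_prop) only
    [osc, intervalIntegral.integral_sub]
  simp [sin_ofNat_mul_two_pi]

lemma integral_osc_sq : ∫ φ in (0 : ℝ)..(2 * π), osc φ ^ 2 = 2 * π := by
  simp (disch := apply Continuous.intervalIntegrable; fun_prop) only
    [osc_sq, intervalIntegral.integral_add, intervalIntegral.integral_sub,
      intervalIntegral.integral_div]
  simp [sin_ofNat_mul_two_pi]

lemma integral_const_add_mul_osc_add_mul_osc_sq (a b c : ℝ) :
    ∫ φ in (0 : ℝ)..(2 * π), (a + b * osc φ + c * osc φ ^ 2) = 2 * π * (a + c) := by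
  simp (disch := apply Continuous.intervalIntegrable; fun_prop) only
    [intervalIntegral.integral_add, intervalIntegral.integral_const_mul, integral_osc,
      integral_osc_sq]
  simp; ring

lemma dot_deriv_bcurve_self (R t φ : ℝ) :
    dot (deriv (bcurve R t) φ) (deriv (bcurve R t) φ)
      = R ^ 2 * ((1 + t ^ 2) ^ 2 + 2 * t ^ 2 * osc φ) := by
  rw [(hasDerivAt_bcurve R t φ).deriv, dot, osc, cos_four_mul_eq, cos_two_mul]
  linear_combination R ^ 2 * (1 + t ^ 2) ^ 2 * sin_sq_add_cos_sq φ

lemma blength_eq_mul_integral {R : ℝ} (hR : 0 ≤ R) (t : ℝ) :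
    blength R t = R * ∫ φ in (0 : ℝ)..(2 * π), √((1 + t ^ 2) ^ 2 + 2 * t ^ 2 * osc φ) := by
  simp only [blength, dot_deriv_bcurve_self, sqrt_mul (sq_nonneg R), sqrt_sq hR,
    intervalIntegral.integral_const_mul]

lemma integral_sqrtApprox_osc (t : ℝ) :
    ∫ φ in (0 : ℝ)..(2 * π), sqrtApprox (1 + t ^ 2) (2 * t ^ 2 * osc φ)
      = 2 * π * (1 + t ^ 2) - π * t ^ 4 / (1 + t ^ 2) ^ 3 := by
  have hs : 1 + t ^ 2 ≠ 0 := by positivity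
  have hquad : ∀ φ, sqrtApprox (1 + t ^ 2) (2 * t ^ 2 * osc φ)
      = (1 + t ^ 2) + t ^ 2 / (1 + t ^ 2) * osc φ
        + -(t ^ 4 / (2 * (1 + t ^ 2) ^ 3)) * osc φ ^ 2 := by
    intro φ; rw [sqrtApprox]; field_simp; ring
  simp only [hquad, integral_const_add_mul_osc_add_mul_osc_sq]
  field_simp
  ring

noncomputable def lengthRemainder (t : ℝ) : ℝ :=
  ∫ φ in (0 : ℝ)..(2 * π),
    (√((1 + t ^ 2) ^ 2 + 2 * t ^ 2 * osc φ) - sqrtApprox (1 + t ^ 2) (2 * t ^ 2 * osc φ))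

lemma blength_eq {R : ℝ} (hR : 0 ≤ R) (t : ℝ) :
    blength R t
      = R * (2 * π * (1 + t ^ 2) - π * t ^ 4 / (1 + t ^ 2) ^ 3 + lengthRemainder t) := by
  rw [blength_eq_mul_integral hR, lengthRemainder, intervalIntegral.integral_sub
    (by apply Continuous.intervalIntegrable; fun_prop)
    (by apply Continuous.intervalIntegrable; unfold sqrtApprox; fun_prop),
    integral_sqrtApprox_osc]
  ring

lemma abs_sqrt_sub_sqrtApprox_osc_le {t : ℝ} (ht : t ^ 2 ≤ 1 / 8) (φ : ℝ) :
    |√((1 + t ^ 2) ^ 2 + 2 * t ^ 2 * osc φ) - sqrtApprox (1 + t ^ 2) (2 * t ^ 2 * osc φ)|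
      ≤ 64 * t ^ 6 := by
  have hw : |2 * t ^ 2 * osc φ| ≤ 4 * t ^ 2 := by
    rw [abs_mul, abs_of_nonneg (by positivity : 0 ≤ 2 * t ^ 2)]
    nlinarith [abs_osc_le φ, sq_nonneg t]
  have hs : 1 ≤ (1 + t ^ 2) ^ 5 := one_le_pow₀ (by nlinarith)
  calc _ ≤ |2 * t ^ 2 * osc φ| ^ 3 / (1 + t ^ 2) ^ 5 :=
        abs_sqrt_sq_add_sub_sqrtApprox_le (by positivity) (by nlinarith [sq_nonneg t])
    _ ≤ |2 * t ^ 2 * osc φ| ^ 3 := div_le_self (by positivity) hs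
    _ ≤ (4 * t ^ 2) ^ 3 := by gcongr
    _ = 64 * t ^ 6 := by ring

lemma lengthRemainder_isBigO : lengthRemainder =O[𝓝 0] fun t => t ^ 6 := by
  refine IsBigO.of_bound (2 * π * 64) ?_
  have hsmall : ∀ᶠ t : ℝ in 𝓝 0, t ^ 2 < 1 / 8 :=
    (continuous_pow 2).continuousAt.eventually_lt continuousAt_const (by norm_num)
  filter_upwards [hsmall] with t ht
  rw [Real.norm_of_nonneg (by positivity : (0 : ℝ) ≤ t ^ 6), lengthRemainder]
  refine (intervalIntegral.norm_integral_le_of_norm_le_const (C := 64 * t ^ 6)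
    fun φ _ => abs_sqrt_sub_sqrtApprox_osc_le ht.le φ).trans_eq ?_
  rw [sub_zero, abs_of_pos two_pi_pos]; ring

/-- The total length of the boundary curve of the trial surface satisfies
`L(t) = πR(2 + 2t² − t⁴) + O(t⁶)` as `t → 0`. -/
theorem euler_plateau_boundary_length_expansion (R : ℝ) (hR : 0 < R) :
    (fun t => blength R t - π * R * (2 + 2 * t ^ 2 - t ^ 4)) =O[nhds 0] fun t => t ^ 6 := by
  have hsplit : (fun t => blength R t - π * R * (2 + 2 * t ^ 2 - t ^ 4)) = fun t =>
      R * lengthRemainder t + π * R * (t ^ 6 * ((3 + 3 * t ^ 2 + t ^ 4) / (1 + t ^ 2) ^ 3)) := by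
    funext t
    have : (1 + t ^ 2) ^ 3 ≠ 0 := by positivity
    rw [blength_eq hR.le]
    field_simp
    ring
  have hcont : Continuous fun t : ℝ => (3 + 3 * t ^ 2 + t ^ 4) / (1 + t ^ 2) ^ 3 :=
    (by fun_prop : Continuous fun t : ℝ => 3 + 3 * t ^ 2 + t ^ 4).div (by fun_prop)
      fun t => by positivity
  rw [hsplit]
  exact (lengthRemainder_isBigO.const_mul_left R).add <| by
    simpa using ((isBigO_refl (fun t : ℝ => t ^ 6) _).mul
      ((hcont.tendsto 0).isBigO_one ℝ)).const_mul_left (π * R)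
end

section
/- For the curve c(φ) = (R(1+t²)cos φ, R(1−t²)sin φ, tR sin 2φ), the squared curvature satisfies κ(φ)² = [1 + t²(10 − 6cos 4φ) − t⁴(2 − 6cos 2φ − 2cos 6φ) + t⁶(10 − 6cos 4φ) + t⁸] / (R²[(1+t²)² − 2t²(cos 2φ − cos 4φ)]³). -/
/-!
Lagrange's identity `|c' × c''|² = |c'|²|c''|² - (c' · c'')²` reduces the claim to the three dot
products of `c'` and `c''`, each of which is `R²` times a trigonometric polynomial in `2φ`. The
numerator is then a polynomial identity in `cos 2φ` modulo `sin² 2φ + cos² 2φ = 1`, and the factor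
`(1 + t²)² - 2t²(cos 2φ - cos 4φ) = (t² - 1/8)² + 63/64 + 4t²(cos 2φ - 1/4)²` of `|c'|²` never
vanishes, so the powers of `R` cancel.
-/

open Real

/-- Cross product on `ℝ³ = ℝ × ℝ × ℝ`. -/
noncomputable def cross (a b : ℝ × ℝ × ℝ) : ℝ × ℝ × ℝ :=
  (a.2.1 * b.2.2 - a.2.2 * b.2.1, a.2.2 * b.1 - a.1 * b.2.2, a.1 * b.2.1 - a.2.1 * b.1)

theorem dot_cross_cross (a b : ℝ × ℝ × ℝ) :
    dot (cross a b) (cross a b) = dot a a * dot b b - dot a b ^ 2 := by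
  simp only [dot, cross]
  ring

noncomputable def bcurveDeriv (R t φ : ℝ) : ℝ × ℝ × ℝ :=
  (-(R * (1 + t ^ 2) * sin φ), R * (1 - t ^ 2) * cos φ, 2 * t * R * cos (2 * φ))

noncomputable def bcurveDeriv2 (R t φ : ℝ) : ℝ × ℝ × ℝ :=
  (-(R * (1 + t ^ 2) * cos φ), -(R * (1 - t ^ 2) * sin φ), -(4 * t * R * sin (2 * φ)))

theorem deriv_bcurve (R t : ℝ) : deriv (bcurve R t) = bcurveDeriv R t := by
  ext1 φ
  have hc := ((hasDerivAt_cos φ).const_mul (R * (1 + t ^ 2))).prodMk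
    (((hasDerivAt_sin φ).const_mul (R * (1 - t ^ 2))).prodMk
      (((hasDerivAt_sin (2 * φ)).comp φ ((hasDerivAt_id φ).const_mul 2)).const_mul (t * R)))
  refine (hc.congr_deriv ?_).deriv
  rw [bcurveDeriv]
  ring_nf

theorem deriv_bcurveDeriv (R t : ℝ) : deriv (bcurveDeriv R t) = bcurveDeriv2 R t := by
  ext1 φ
  have hc := ((hasDerivAt_sin φ).const_mul (R * (1 + t ^ 2))).neg.prodMk
    (((hasDerivAt_cos φ).const_mul (R * (1 - t ^ 2))).prodMk
      (((hasDerivAt_cos (2 * φ)).comp φ ((hasDerivAt_id φ).const_mul 2)).const_mul (2 * t * R)))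
  refine (hc.congr_deriv ?_).deriv
  rw [bcurveDeriv2]
  ring_nf

theorem dot_bcurveDeriv_self (R t φ : ℝ) :
    dot (bcurveDeriv R t φ) (bcurveDeriv R t φ)
      = R ^ 2 * ((1 + t ^ 2) ^ 2 - 2 * t ^ 2 * (cos (2 * φ) - cos (4 * φ))) := by
  rw [show 4 * φ = 2 * (2 * φ) by ring]
  simp only [dot, bcurveDeriv, cos_two_mul]
  linear_combination R ^ 2 * (1 + t ^ 2) ^ 2 * sin_sq_add_cos_sq φ

theorem dot_bcurveDeriv2_self (R t φ : ℝ) :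
    dot (bcurveDeriv2 R t φ) (bcurveDeriv2 R t φ)
      = R ^ 2 * ((1 + t ^ 2) ^ 2 + 6 * t ^ 2 + 2 * t ^ 2 * cos (2 * φ)
          - 8 * t ^ 2 * cos (4 * φ)) := by
  rw [show 4 * φ = 2 * (2 * φ) by ring]
  simp only [dot, bcurveDeriv2, cos_two_mul, sin_two_mul]
  linear_combination R ^ 2 * ((1 - t ^ 2) ^ 2 + 64 * t ^ 2 * cos φ ^ 2) * sin_sq_add_cos_sq φ

theorem dot_bcurveDeriv_bcurveDeriv2 (R t φ : ℝ) :
    dot (bcurveDeriv R t φ) (bcurveDeriv2 R t φ)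
      = R ^ 2 * (2 * t ^ 2 * (sin (2 * φ) - 2 * sin (4 * φ))) := by
  rw [show 4 * φ = 2 * (2 * φ) by ring]
  simp only [dot, bcurveDeriv, bcurveDeriv2, sin_two_mul]
  ring

theorem bcurve_curvature_numerator_eq (t φ : ℝ) :
    ((1 + t ^ 2) ^ 2 - 2 * t ^ 2 * (cos (2 * φ) - cos (4 * φ)))
        * ((1 + t ^ 2) ^ 2 + 6 * t ^ 2 + 2 * t ^ 2 * cos (2 * φ) - 8 * t ^ 2 * cos (4 * φ))
        - (2 * t ^ 2 * (sin (2 * φ) - 2 * sin (4 * φ))) ^ 2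
      = 1 + t ^ 2 * (10 - 6 * cos (4 * φ)) - t ^ 4 * (2 - 6 * cos (2 * φ) - 2 * cos (6 * φ))
          + t ^ 6 * (10 - 6 * cos (4 * φ)) + t ^ 8 := by
  rw [show 4 * φ = 2 * (2 * φ) by ring, show 6 * φ = 3 * (2 * φ) by ring,
    cos_two_mul (2 * φ), sin_two_mul (2 * φ), cos_three_mul]
  linear_combination -4 * t ^ 4 * (1 - 4 * cos (2 * φ)) ^ 2 * sin_sq_add_cos_sq (2 * φ)

theorem bcurve_speed_factor_pos (t φ : ℝ) :
    0 < (1 + t ^ 2) ^ 2 - 2 * t ^ 2 * (cos (2 * φ) - cos (4 * φ)) := by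
  have h : (1 + t ^ 2) ^ 2 - 2 * t ^ 2 * (cos (2 * φ) - cos (4 * φ))
      = (t ^ 2 - 1 / 8) ^ 2 + 63 / 64 + (2 * t * (cos (2 * φ) - 1 / 4)) ^ 2 := by
    rw [show 4 * φ = 2 * (2 * φ) by ring, cos_two_mul (2 * φ)]
    ring
  rw [h]
  positivity

theorem euler_plateau_boundary_curvature_squared_general
    (R t : ℝ) (φ : ℝ) :
    dot (cross (deriv (bcurve R t) φ) (deriv (deriv (bcurve R t)) φ))
        (cross (deriv (bcurve R t) φ) (deriv (deriv (bcurve R t)) φ))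
      / dot (deriv (bcurve R t) φ) (deriv (bcurve R t) φ) ^ 3
      = (1 + t ^ 2 * (10 - 6 * cos (4 * φ)) - t ^ 4 * (2 - 6 * cos (2 * φ) - 2 * cos (6 * φ))
          + t ^ 6 * (10 - 6 * cos (4 * φ)) + t ^ 8)
        / (R ^ 2 * ((1 + t ^ 2) ^ 2 - 2 * t ^ 2 * (cos (2 * φ) - cos (4 * φ))) ^ 3) := by
  rw [deriv_bcurve, deriv_bcurveDeriv, dot_cross_cross, dot_bcurveDeriv_self,
    dot_bcurveDeriv2_self, dot_bcurveDeriv_bcurveDeriv2, ← bcurve_curvature_numerator_eq]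
  have hD := bcurve_speed_factor_pos t φ
  rcases eq_or_ne R 0 with rfl | hR
  · simp -- both sides are `0` by the convention `x / 0 = 0`
  · field_simp

/-- The squared curvature `κ² = |c' × c''|²/|c'|⁶` of the boundary curve equals the explicit
rational-trigonometric expression from the paper. -/
theorem euler_plateau_boundary_curvature_squared
    (R t : ℝ) (hR : 0 < R) (ht : |t| < 1) (φ : ℝ) :
    dot (cross (deriv (bcurve R t) φ) (deriv (deriv (bcurve R t)) φ))
        (cross (deriv (bcurve R t) φ) (deriv (deriv (bcurve R t)) φ))
      / dot (deriv (bcurve R t) φ) (deriv (bcurve R t) φ) ^ 3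
      = (1 + t ^ 2 * (10 - 6 * cos (4 * φ)) - t ^ 4 * (2 - 6 * cos (2 * φ) - 2 * cos (6 * φ))
          + t ^ 6 * (10 - 6 * cos (4 * φ)) + t ^ 8)
        / (R ^ 2 * ((1 + t ^ 2) ^ 2 - 2 * t ^ 2 * (cos (2 * φ) - cos (4 * φ))) ^ 3) :=
  euler_plateau_boundary_curvature_squared_general R t φ
end
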